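/- Let ℬ and 𝒜 be abelian categories and F : ℬ ⥤ Ch_{≥0}(𝒜) a functor into non-negatively graded chain complexes, with cross effects computed by the kernel formula in the abelian category Ch_{≥0}(𝒜). If for some k ≥ 1 the chain complex cr_kF(X₁,…,X_k) is contractible for all objects X₁,…,X_k of ℬ, then cr_{k+1}F(X₁,…,X_{k+1}) is contractible for all objects X₁,…,X_{k+1}; consequently cr_ℓF is objectwise contractible for every ℓ ≥ k. -/

import Mathlib

/-!
Statement 7: Let ℬ, 𝒜 be abelian categories and `F : ℬ ⥤ Ch_{≥0}(𝒜)` a functor into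
non-negatively graded chain complexes, with cross effects computed by the kernel formula in the
abelian category `Ch_{≥0}(𝒜) = ChainComplex 𝒜 ℕ`.  If for some `k ≥ 1` the chain complex
`cr_k F (X₁,…,X_k)` is contractible for all objects, then so is `cr_{k+1} F (X₁,…,X_{k+1})`;
consequently `cr_ℓ F` is objectwise contractible for every `ℓ ≥ k`.

Here `crObj m F` is the `(m+1)`-st cross effect (as `m` ranges over `ℕ` the arity `m+1`
ranges over all integers `≥ 1`), and contractible means the identity is chain null-homotopic.
-/

open CategoryTheory CategoryTheory.Limits ZeroObject

attribute [local instance] CategoryTheory.Abelian.hasFiniteBiproducts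

universe v u v' u'

variable {B : Type u} [Category.{v} B] [Abelian B]
variable {A : Type u'} [Category.{v'} A] [Abelian A]

/-- The morphism collapsing the `j`-th summand to zero. -/
noncomputable def collapse {n : ℕ} (X : Fin (n + 1) → B) (j : Fin (n + 1)) :
    (⨁ X) ⟶ ⨁ (X ∘ j.succAbove) :=
  biproduct.lift fun k => biproduct.π X (j.succAbove k)

/-- The `(n+1)`-st cross effect of a functor `F : ℬ ⥤ 𝒯` into an abelian category `𝒯`
(here applied with `𝒯 = Ch_{≥0}(𝒜)`), computed by the kernel formula in `𝒯`. -/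
noncomputable def crObj {T : Type*} [Category T] [Abelian T]
    (n : ℕ) (F : B ⥤ T) (X : Fin (n + 1) → B) : T :=
  kernel (biproduct.lift fun j : Fin (n + 1) => F.map (collapse X j))

/-!
Write `E_S` for `F` applied to the idempotent of `⨁ X` killing the summands indexed by `S`; these
commute and `E_S ≫ E_S' = E_{S ∪ S'}`. The `(n+2)`-nd cross effect of `X₀, …, X_{n+1}` is the common
kernel of the `E_{j}`. Merging `X₀` and `X₁` into one summand (the fibres of `Fin.predAbove 0`), the
`(n+1)`-st cross effect of `X₀ ⊞ X₁, X₂, …, X_{n+1}` becomes the common kernel of `E_{0,1}` and the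
`E_{j}` for `j ≥ 2`. It contains the former, and `(1 - E_{0}) ≫ (1 - E_{1})` retracts it back onto
it. Contractibility passes to retracts.
-/

namespace CategoryTheory.Limits.biproduct

variable {C : Type*} [Category C] [Preadditive C] [HasFiniteBiproducts C]
variable {J : Type} [Fintype J] [DecidableEq J] (f : J → C)

noncomputable def killSummands (S : Finset J) : ⨁ f ⟶ ⨁ f :=
  biproduct.map fun j => if j ∈ S then 0 else 𝟙 (f j)

lemma ι_killSummands (S : Finset J) (a : J) :
    biproduct.ι f a ≫ killSummands f S = if a ∈ S then 0 else biproduct.ι f a := by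
  split_ifs with ha <;> simp [killSummands, biproduct.ι_map, ha]

lemma killSummands_comp_killSummands (S T : Finset J) :
    killSummands f S ≫ killSummands f T = killSummands f (S ∪ T) := by
  refine biproduct.hom_ext' _ _ fun a => ?_
  by_cases ha : a ∈ S <;> by_cases hb : a ∈ T <;> simp [← Category.assoc, ι_killSummands, ha, hb]

variable {K : Type} [Fintype K] [DecidableEq K]

noncomputable abbrev fiberwise (σ : J → K) (k : K) : C :=
  ⨁ fun j : {j // σ j = k} => f j

noncomputable def fiberwiseIso (σ : J → K) : ⨁ fiberwise f σ ≅ ⨁ f where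
  hom := biproduct.desc fun k => biproduct.desc fun j => biproduct.ι f j
  inv := biproduct.lift fun k => biproduct.lift fun j => biproduct.π f j
  hom_inv_id := by
    refine biproduct.hom_ext' _ _ fun k => biproduct.hom_ext' _ _ fun j => ?_
    refine biproduct.hom_ext _ _ fun k' => biproduct.hom_ext _ _ fun j' => ?_
    rcases eq_or_ne k k' with rfl | hk
    · simp [biproduct.ι_π, Subtype.ext_iff]
    · have hj : (j : J) ≠ j' := fun h => hk (j.2.symm.trans ((congrArg σ h).trans j'.2))
      simp [hk, hj]
  inv_hom_id := by
    simp_rw [biproduct.lift_desc]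
    rw [Fintype.sum_fiberwise σ fun j => biproduct.π f j ≫ biproduct.ι f j, biproduct.total]

lemma killSummands_comp_fiberwiseIso_hom (σ : J → K) (T : Finset K) :
    killSummands (fiberwise f σ) T ≫ (fiberwiseIso f σ).hom =
      (fiberwiseIso f σ).hom ≫ killSummands f (Finset.univ.filter fun j => σ j ∈ T) := by
  refine biproduct.hom_ext' _ _ fun k => biproduct.hom_ext' _ _ fun j => ?_
  obtain ⟨j, rfl⟩ := j
  by_cases hj : σ j ∈ T <;> simp [← Category.assoc, ι_killSummands, fiberwiseIso, hj]

lemma fiberwiseIso_inv_comp_killSummands (σ : J → K) (T : Finset K) :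
    (fiberwiseIso f σ).inv ≫ killSummands (fiberwise f σ) T =
      killSummands f (Finset.univ.filter fun j => σ j ∈ T) ≫ (fiberwiseIso f σ).inv := by
  rw [Iso.inv_comp_eq, ← Category.assoc, ← killSummands_comp_fiberwiseIso_hom, Category.assoc,
    Iso.hom_inv_id, Category.comp_id]

end CategoryTheory.Limits.biproduct

namespace CategoryTheory

namespace Retract

variable {C : Type*} [Category C]

noncomputable def ofKernels [HasZeroMorphisms C] {V V' W W' : C} {L : V ⟶ W} {L' : V' ⟶ W'}
    [HasKernel L] [HasKernel L'] (a : V ⟶ V') (b : V' ⟶ V) (ha : kernel.ι L ≫ a ≫ L' = 0)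
    (hb : kernel.ι L' ≫ b ≫ L = 0) (hab : kernel.ι L ≫ a ≫ b = kernel.ι L) :
    Retract (kernel L) (kernel L') where
  i := kernel.lift L' (kernel.ι L ≫ a) (by rw [Category.assoc, ha])
  r := kernel.lift L (kernel.ι L' ≫ b) (by rw [Category.assoc, hb])
  retract := by ext; simp [hab]

noncomputable def homotopyIdZero [Preadditive C] {ι : Type*} {c : ComplexShape ι}
    {X Y : HomologicalComplex C c} (h : Retract X Y) (H : Homotopy (𝟙 Y) 0) :
    Homotopy (𝟙 X) 0 :=
  (Homotopy.ofEq (by simp)).trans (((H.compLeft h.i).compRight h.r).trans (Homotopy.ofEq (by simp)))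

end Retract

section Idempotents

variable {C : Type*} [Category C] [Preadditive C] {V : C} {p q : V ⟶ V}

lemma id_sub_comp_id_sub_comp_left (hp : p ≫ p = p) (hpq : p ≫ q = q ≫ p) :
    (𝟙 V - p) ≫ (𝟙 V - q) ≫ p = 0 := by
  have hp' : p ≫ p ≫ q = p ≫ q := by rw [← Category.assoc, hp]
  simp only [Preadditive.sub_comp, Preadditive.comp_sub, Category.id_comp, ← hpq, hp, hp']
  abel

lemma id_sub_comp_id_sub_comp_right (hq : q ≫ q = q) : (𝟙 V - p) ≫ (𝟙 V - q) ≫ q = 0 := by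
  simp only [Preadditive.sub_comp, Preadditive.comp_sub, Category.id_comp, hq]
  abel

lemma id_sub_comp_id_sub_comm {e : V ⟶ V} (hp : p ≫ e = e ≫ p) (hq : q ≫ e = e ≫ q) :
    (𝟙 V - p) ≫ (𝟙 V - q) ≫ e = e ≫ (𝟙 V - p) ≫ (𝟙 V - q) := by
  have hp' : p ≫ e ≫ q = e ≫ p ≫ q := by rw [← Category.assoc, hp, Category.assoc]
  simp only [Preadditive.sub_comp, Preadditive.comp_sub, Category.id_comp, Category.comp_id,
    hq, hp, hp']

end Idempotents

end CategoryTheory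

section CrossEffects

open CategoryTheory.Limits.biproduct

lemma killSummands_singleton_comp_collapse {n : ℕ} (X : Fin (n + 1) → B) (j : Fin (n + 1)) :
    killSummands X {j} ≫ collapse X j = collapse X j := by
  refine biproduct.hom_ext _ _ fun k => ?_
  simp [collapse, killSummands, Fin.succAbove_ne]

lemma collapse_comp_desc {n : ℕ} (X : Fin (n + 1) → B) (j : Fin (n + 1)) :
    collapse X j ≫ biproduct.desc (fun k => biproduct.ι X (j.succAbove k)) =
      killSummands X {j} := by
  rw [← Category.comp_id (killSummands X {j}), ← biproduct.total, Preadditive.comp_sum,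
    Fin.sum_univ_succAbove _ j, collapse, biproduct.lift_desc]
  simp [killSummands, Fin.succAbove_ne]

lemma map_killSummands_comp_map_killSummands {T : Type*} [Category T] {J : Type} [Fintype J]
    [DecidableEq J] (F : B ⥤ T) (X : J → B) (S S' : Finset J) :
    F.map (killSummands X S) ≫ F.map (killSummands X S') = F.map (killSummands X (S ∪ S')) := by
  rw [← F.map_comp, killSummands_comp_killSummands]

variable {T : Type*} [Category T] [Preadditive T] [HasFiniteBiproducts T]

lemma comp_lift_map_collapse_eq_zero_iff {n : ℕ} (F : B ⥤ T) (X : Fin (n + 1) → B) {W : T}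
    (g : W ⟶ F.obj (⨁ X)) :
    g ≫ biproduct.lift (fun j => F.map (collapse X j)) = 0 ↔
      ∀ j, g ≫ F.map (killSummands X {j}) = 0 := by
  refine ⟨fun hg j => ?_, fun hg => biproduct.hom_ext _ _ fun j => ?_⟩
  · have hj : g ≫ F.map (collapse X j) = 0 := by
      simpa using congrArg (· ≫ biproduct.π _ j) hg
    rw [← collapse_comp_desc, F.map_comp, ← Category.assoc, hj, zero_comp]
  · rw [Category.assoc, biproduct.lift_π, zero_comp, ← killSummands_singleton_comp_collapse,
      F.map_comp, ← Category.assoc, hg, zero_comp]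

end CrossEffects

section CrossEffectRetract

open CategoryTheory.Limits.biproduct

variable {T : Type*} [Category T] [Abelian T]

lemma kernel_ι_comp_map_killSummands {n : ℕ} (F : B ⥤ T) (X : Fin (n + 1) → B)
    {S : Finset (Fin (n + 1))} (hS : S.Nonempty) :
    kernel.ι (biproduct.lift fun j => F.map (collapse X j)) ≫ F.map (killSummands X S) = 0 := by
  obtain ⟨j, hj⟩ := hS
  rw [← Finset.insert_eq_of_mem hj, Finset.insert_eq, ← map_killSummands_comp_map_killSummands,
    ← Category.assoc, (comp_lift_map_collapse_eq_zero_iff F X _).1 (kernel.condition _) j,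
    zero_comp]

lemma kernel_ι_comp_map_fiberwiseIso_inv_comp_lift {m n : ℕ} (F : B ⥤ T)
    (X : Fin (m + 1) → B) {σ : Fin (m + 1) → Fin (n + 1)} (hσ : σ.Surjective) :
    kernel.ι (biproduct.lift fun j => F.map (collapse X j)) ≫ F.map (fiberwiseIso X σ).inv ≫
      biproduct.lift (fun k => F.map (collapse (fiberwise X σ) k)) = 0 := by
  rw [← Category.assoc, comp_lift_map_collapse_eq_zero_iff]
  intro k
  obtain ⟨j, rfl⟩ := hσ k
  rw [Category.assoc, ← F.map_comp, fiberwiseIso_inv_comp_killSummands, F.map_comp,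
    ← Category.assoc, kernel_ι_comp_map_killSummands F X ⟨j, by simp⟩, zero_comp]

lemma Fin.filter_predAbove_zero_mem_singleton_succ {n : ℕ} (i : Fin n) :
    (Finset.univ.filter fun j : Fin (n + 2) => Fin.predAbove 0 j ∈ ({i.succ} : Finset _)) =
      {i.succ.succ} := by
  ext j
  cases j using Fin.cases <;> simp [eq_comm]

lemma kernel_ι_comp_map_fiberwiseIso_hom_comp_map_killSummands {n : ℕ} (F : B ⥤ T)
    (X : Fin (n + 2) → B) (i : Fin n) :
    kernel.ι (biproduct.lift fun k => F.map (collapse (fiberwise X (Fin.predAbove 0)) k)) ≫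
      F.map (fiberwiseIso X (Fin.predAbove 0)).hom ≫ F.map (killSummands X {i.succ.succ}) = 0 := by
  rw [← F.map_comp, ← Fin.filter_predAbove_zero_mem_singleton_succ i,
    ← killSummands_comp_fiberwiseIso_hom, F.map_comp, ← Category.assoc,
    kernel_ι_comp_map_killSummands F _ (Finset.singleton_nonempty _), zero_comp]

noncomputable def crObjSuccRetract {n : ℕ} (F : B ⥤ T) (X : Fin (n + 2) → B) :
    Retract (crObj (n + 1) F X) (crObj n F (fiberwise X (Fin.predAbove 0))) := by
  let E : Finset (Fin (n + 2)) → (F.obj (⨁ X) ⟶ F.obj (⨁ X)) := fun S => F.map (killSummands X S)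
  have hEcomm : ∀ S S', E S ≫ E S' = E S' ≫ E S := fun S S' => by
    simp only [E, map_killSummands_comp_map_killSummands, Finset.union_comm]
  have hEidem : ∀ S, E S ≫ E S = E S := fun S => by
    simp only [E, map_killSummands_comp_map_killSummands, Finset.union_self]
  refine Retract.ofKernels (F.map (fiberwiseIso X _).inv)
    (F.map (fiberwiseIso X _).hom ≫ (𝟙 _ - E {0}) ≫ (𝟙 _ - E {1}))
    (kernel_ι_comp_map_fiberwiseIso_inv_comp_lift F X (Fin.predAbove_surjective 0)) ?_ ?_
  · rw [← Category.assoc, comp_lift_map_collapse_eq_zero_iff]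
    intro j
    simp only [Category.assoc]
    cases j using Fin.cases with
    | zero => rw [id_sub_comp_id_sub_comp_left (hEidem _) (hEcomm _ _), comp_zero, comp_zero]
    | succ j =>
      cases j using Fin.cases with
      | zero =>
        rw [Fin.succ_zero_eq_one, id_sub_comp_id_sub_comp_right (hEidem _), comp_zero, comp_zero]
      | succ i =>
        rw [id_sub_comp_id_sub_comm (hEcomm _ _) (hEcomm _ _),
          reassoc_of% kernel_ι_comp_map_fiberwiseIso_hom_comp_map_killSummands, zero_comp]
  · have h0 := kernel_ι_comp_map_killSummands F X (Finset.singleton_nonempty 0)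
    have h1 := kernel_ι_comp_map_killSummands F X (Finset.singleton_nonempty 1)
    rw [← F.map_comp_assoc, Iso.inv_hom_id, F.map_id, Category.id_comp]
    simp [E, Preadditive.comp_sub, reassoc_of% h0, h0, h1]

end CrossEffectRetract

theorem crObj_succ_homotopy_id_zero {ι : Type*} {c : ComplexShape ι} {n : ℕ}
    (F : B ⥤ HomologicalComplex A c)
    (h : ∀ Xs : Fin (n + 1) → B, Nonempty (Homotopy (𝟙 (crObj n F Xs)) 0))
    (X : Fin (n + 2) → B) : Nonempty (Homotopy (𝟙 (crObj (n + 1) F X)) 0) :=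
  (h _).map (crObjSuccRetract F X).homotopyIdZero

/-- If the `(m+1)`-st cross effect of `F : ℬ ⥤ Ch_{≥0}(𝒜)` is objectwise
contractible, then so is the `(m+2)`-nd; consequently so is the `(l+1)`-st for every
`l ≥ m`. -/
theorem cr_contractible_step (m : ℕ) (F : B ⥤ ChainComplex A ℕ)
    (h : ∀ Xs : Fin (m + 1) → B, Nonempty (Homotopy (𝟙 (crObj m F Xs)) 0)) :
    (∀ Xs : Fin (m + 2) → B, Nonempty (Homotopy (𝟙 (crObj (m + 1) F Xs)) 0)) ∧
    (∀ l : ℕ, m ≤ l → ∀ Xs : Fin (l + 1) → B,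
      Nonempty (Homotopy (𝟙 (crObj l F Xs)) 0)) := by
  refine ⟨crObj_succ_homotopy_id_zero F h, fun l hl => ?_⟩
  induction l, hl using Nat.le_induction with
  | base => exact h
  | succ n _ ih => exact crObj_succ_homotopy_id_zero F ih
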